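/- Let G be a 2-connected unit interval graph with unit interval order <, extreme vertices v_L and v_R, and let H = {u,v} be a P₃-hull set with H ≠ {v_L, v_R}. Then the percolation time of H equals max{τ_H(v_L), τ_H(v_R)}, where τ_H(x) is the least k with x ∈ I^k[H]. -/

import Mathlib

open SimpleGraph

variable {V : Type*}

/-- The `P₃`-interval operator: add every vertex with at least two neighbors in `S`. -/
def pInterval (G : SimpleGraph V) (S : Set V) : Set V :=
  S ∪ {v | ∃ u w, u ≠ w ∧ u ∈ S ∧ w ∈ S ∧ G.Adj u v ∧ G.Adj w v}

/-- `pIter G S k = I^k[S]`. -/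
def pIter (G : SimpleGraph V) (S : Set V) : ℕ → Set V
  | 0 => S
  | k + 1 => pInterval G (pIter G S k)

/-- `S` is a `P₃`-hull set of `G` (it percolates `G`). -/
def Percolates (G : SimpleGraph V) (S : Set V) : Prop :=
  ∃ k, pIter G S k = Set.univ

/-- Percolation time of a hull set `S`. -/
noncomputable def percTime (G : SimpleGraph V) (S : Set V) : ℕ :=
  sInf {k | pIter G S k = Set.univ}

/-- The least `k` such that `x ∈ I^k[S]`. -/
noncomputable def percTimeAt (G : SimpleGraph V) (S : Set V) (x : V) : ℕ :=
  sInf {k | x ∈ pIter G S k}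

/-- The percolation time of `G`: the maximum percolation time over all hull sets. -/
noncomputable def percolationTime (G : SimpleGraph V) : ℕ :=
  sSup {t | ∃ S : Set V, Percolates G S ∧ percTime G S = t}

/-- A `P₃`-geodetic set: every vertex outside `S` has at least two neighbors in `S`. -/
def IsGeodetic (G : SimpleGraph V) (S : Set V) : Prop :=
  ∀ v, v ∉ S → ∃ u w, u ≠ w ∧ u ∈ S ∧ w ∈ S ∧ G.Adj u v ∧ G.Adj w v

/-- The `P₃`-geodetic number of `G`. -/
noncomputable def geodeticNumber (G : SimpleGraph V) : ℕ :=
  sInf {n | ∃ S : Set V, IsGeodetic G S ∧ S.ncard = n}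

/-- The `P₃`-hull number of `G`. -/
noncomputable def hullNumber (G : SimpleGraph V) : ℕ :=
  sInf {n | ∃ S : Set V, Percolates G S ∧ S.ncard = n}

/-- A linear order on the vertices of `G` is a unit interval order if every closed
neighborhood is an interval of consecutive vertices. -/
def IsUnitIntervalOrder (G : SimpleGraph V) [LinearOrder V] : Prop :=
  ∀ v x y z : V, (x = v ∨ G.Adj v x) → (z = v ∨ G.Adj v z) → x ≤ y → y ≤ z →
    (y = v ∨ G.Adj v y)

/-- `G` is 2-connected: at least three vertices, connected, and no cut vertex. -/
def TwoConnected (G : SimpleGraph V) [Fintype V] : Prop :=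
  3 ≤ Fintype.card V ∧ G.Connected ∧ ∀ v : V, (G.induce ({v}ᶜ : Set V)).Connected

/-!
In a unit interval order, if `a ~ b` then `[a, b]` is a clique. Hence a vertex `y` beyond all of
a set `S` but before a vertex `x ∈ I[S]` is adjacent to both neighbours of `x` in `S`, and every
gap of `I[{u, v}]` lies between two adjacent vertices of `I[{u, v}]`. So `I^k[{u, v}]` is an
interval of the vertex order for every `k ≥ 2`, and equals `V` as soon as it contains `v_L` and
`v_R`. For `k = 0` this cannot happen as `{u, v} ≠ {v_L, v_R}`; for `k = 1`, either `v_L ~ v_R`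
and `G` is complete, or `v_L` and `v_R` are common neighbours of `u` and `v`, which makes `u` and
`v` universal.
-/

open scoped Interval

lemma Set.pair_eq_of_mem_pair {α : Type*} {a b x y : α} (hxy : x ≠ y) (hx : x ∈ ({a, b} : Set α))
    (hy : y ∈ ({a, b} : Set α)) : ({a, b} : Set α) = {x, y} := by
  simp only [Set.mem_insert_iff, Set.mem_singleton_iff] at hx hy
  rcases hx with rfl | rfl <;> rcases hy with rfl | rfl <;> simp_all [Set.pair_comm]

section Percolation

variable {G : SimpleGraph V} {S : Set V}

lemma subset_pInterval (G : SimpleGraph V) (S : Set V) : S ⊆ pInterval G S :=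
  Set.subset_union_left

lemma pIter_monotone (G : SimpleGraph V) (S : Set V) : Monotone (pIter G S) :=
  monotone_nat_of_le_succ fun k => subset_pInterval G (pIter G S k)

lemma pIter_eq_self_of_pInterval_eq (h : pInterval G S = S) : ∀ n, pIter G S n = S
  | 0 => rfl
  | n + 1 => by rw [pIter, pIter_eq_self_of_pInterval_eq h n, h]

lemma mem_pInterval_pair {u v w : V} (huv : u ≠ v) :
    w ∈ pInterval G {u, v} ↔ w = u ∨ w = v ∨ (G.Adj u w ∧ G.Adj v w) := by
  constructor
  · rintro (h | ⟨p, q, hpq, hp, hq, hpw, hqw⟩)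
    · obtain rfl | rfl := h <;> simp
    · simp only [Set.mem_insert_iff, Set.mem_singleton_iff] at hp hq
      rcases hp with rfl | rfl <;> rcases hq with rfl | rfl <;> simp_all
  · rintro (rfl | rfl | ⟨hu, hv⟩)
    · exact subset_pInterval G _ (Set.mem_insert _ _)
    · exact subset_pInterval G _ (Set.mem_insert_of_mem _ rfl)
    · exact Or.inr ⟨u, v, huv, Set.mem_insert _ _, Set.mem_insert_of_mem _ rfl, hu, hv⟩

lemma mem_pIter_percTimeAt (h : Percolates G S) (x : V) : x ∈ pIter G S (percTimeAt G S x) :=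
  Nat.sInf_mem (s := {k | x ∈ pIter G S k}) <| by
    obtain ⟨k, hk⟩ := h
    exact ⟨k, by simp [hk]⟩

lemma percTime_le {k : ℕ} (h : pIter G S k = Set.univ) : percTime G S ≤ k :=
  Nat.sInf_le h

lemma pIter_percTime (h : Percolates G S) : pIter G S (percTime G S) = Set.univ :=
  Nat.sInf_mem (s := {k | pIter G S k = Set.univ}) h

lemma percTimeAt_le_percTime (h : Percolates G S) (x : V) : percTimeAt G S x ≤ percTime G S :=
  Nat.sInf_le (s := {k | x ∈ pIter G S k}) <| by simp [pIter_percTime h]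

end Percolation

section UnitInterval

variable [LinearOrder V] {G : SimpleGraph V} {S : Set V}

lemma IsUnitIntervalOrder.isClique_uIcc (hG : IsUnitIntervalOrder G) {a b : V}
    (hab : G.Adj a b) : G.IsClique [[a, b]] := by
  wlog hle : a ≤ b generalizing a b
  · rw [Set.uIcc_comm]
    exact this hab.symm (le_of_not_ge hle)
  rw [Set.uIcc_of_le hle]
  suffices ∀ p q, a ≤ p → p < q → q ≤ b → G.Adj p q by
    intro p hp q hq hpq
    rcases hpq.lt_or_gt with h | h
    · exact this p q hp.1 h hq.2
    · exact (this q p hq.1 h hp.2).symm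
  intro p q hap hpq hqb
  have haq : G.Adj a q :=
    (hG a a q b (Or.inl rfl) (Or.inr hab) (hap.trans hpq.le) hqb).resolve_left
      (hap.trans_lt hpq).ne'
  exact ((hG q a p q (Or.inr haq.symm) (Or.inl rfl) hap hpq.le).resolve_left hpq.ne).symm

lemma IsUnitIntervalOrder.mem_pInterval_of_mem_uIcc (hG : IsUnitIntervalOrder G) {a b y : V}
    (ha : a ∈ S) (hb : b ∈ S) (hab : G.Adj a b) (hy : y ∈ [[a, b]]) : y ∈ pInterval G S := by
  by_cases hya : y = a
  · exact subset_pInterval G S (hya ▸ ha)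
  by_cases hyb : y = b
  · exact subset_pInterval G S (hyb ▸ hb)
  have hclique := hG.isClique_uIcc hab
  exact Or.inr ⟨a, b, hab.ne, ha, hb, hclique Set.left_mem_uIcc hy (Ne.symm hya),
    hclique Set.right_mem_uIcc hy (Ne.symm hyb)⟩

lemma IsUnitIntervalOrder.mem_pInterval_of_forall_mem_uIcc (hG : IsUnitIntervalOrder G)
    {x y : V} (hx : x ∈ pInterval G S) (hy : ∀ s ∈ S, y ∈ [[s, x]]) : y ∈ pInterval G S := by
  by_cases hyS : y ∈ S
  · exact subset_pInterval G S hyS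
  rcases hx with hx | ⟨p, q, hpq, hp, hq, hpx, hqx⟩
  · have hyx : y = x := by simpa [Set.uIcc_self] using hy x hx
    exact subset_pInterval G S (hyx ▸ hx)
  · refine Or.inr ⟨p, q, hpq, hp, hq, ?_, ?_⟩
    · exact hG.isClique_uIcc hpx Set.left_mem_uIcc (hy p hp) (by rintro rfl; exact hyS hp)
    · exact hG.isClique_uIcc hqx Set.left_mem_uIcc (hy q hq) (by rintro rfl; exact hyS hq)

lemma IsUnitIntervalOrder.ordConnected_pInterval (hG : IsUnitIntervalOrder G)
    (hS : ∀ y, (∃ s ∈ S, s ≤ y) → (∃ s ∈ S, y ≤ s) → y ∈ pInterval G S) :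
    (pInterval G S).OrdConnected := by
  refine ⟨fun x hx z hz y ⟨hxy, hyz⟩ => ?_⟩
  by_cases hlo : ∃ s ∈ S, s ≤ y
  · by_cases hhi : ∃ s ∈ S, y ≤ s
    · exact hS y hlo hhi
    · push Not at hhi
      exact hG.mem_pInterval_of_forall_mem_uIcc hz fun s hs => Set.mem_uIcc_of_le (hhi s hs).le hyz
  · push Not at hlo
    exact hG.mem_pInterval_of_forall_mem_uIcc hx fun s hs => Set.mem_uIcc_of_ge hxy (hlo s hs).le

lemma IsUnitIntervalOrder.ordConnected_pInterval_of_ordConnected (hG : IsUnitIntervalOrder G)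
    (hS : S.OrdConnected) : (pInterval G S).OrdConnected :=
  hG.ordConnected_pInterval fun _ ⟨_, hs, hsy⟩ ⟨_, ht, hyt⟩ =>
    subset_pInterval G S (hS.out hs ht ⟨hsy, hyt⟩)

-- `I[{u, v}]` itself need not be order-convex: a vertex between `u` and a common neighbour
-- of `u` and `v` need not be adjacent to `v`.
lemma IsUnitIntervalOrder.ordConnected_pIter_two_pair (hG : IsUnitIntervalOrder G)
    {u v c : V} (huv : u ≠ v) (hu : G.Adj u c) (hv : G.Adj v c) :
    (pIter G {u, v} 2).OrdConnected := by
  set A := pInterval G {u, v}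
  have hAu : u ∈ A := (mem_pInterval_pair huv).2 (Or.inl rfl)
  have hAv : v ∈ A := (mem_pInterval_pair huv).2 (Or.inr (Or.inl rfl))
  have hAc : c ∈ A := (mem_pInterval_pair huv).2 (Or.inr (Or.inr ⟨hu, hv⟩))
  have hbridge : ∀ s ∈ A, ∀ y ∈ [[s, c]], y ∈ pInterval G A := by
    intro s hs y hy
    rcases (mem_pInterval_pair huv).1 hs with rfl | rfl | ⟨hsu, -⟩
    · exact hG.mem_pInterval_of_mem_uIcc hAu hAc hu hy
    · exact hG.mem_pInterval_of_mem_uIcc hAv hAc hv hy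
    · rcases Set.uIcc_subset_uIcc_union_uIcc hy with h | h
      · exact hG.mem_pInterval_of_mem_uIcc hs hAu hsu.symm h
      · exact hG.mem_pInterval_of_mem_uIcc hAu hAc hu h
  refine hG.ordConnected_pInterval fun y ⟨s, hs, hsy⟩ ⟨t, ht, hyt⟩ => ?_
  rcases le_total y c with hyc | hcy
  · exact hbridge s hs y (Set.mem_uIcc_of_le hsy hyc)
  · exact hbridge t ht y (Set.mem_uIcc_of_ge hcy hyt)

lemma IsUnitIntervalOrder.ordConnected_pIter_pair (hG : IsUnitIntervalOrder G)
    {u v c : V} (huv : u ≠ v) (hu : G.Adj u c) (hv : G.Adj v c) {n : ℕ} (hn : 2 ≤ n) :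
    (pIter G {u, v} n).OrdConnected := by
  induction n, hn using Nat.le_induction with
  | base => exact hG.ordConnected_pIter_two_pair huv hu hv
  | succ n _ ih => exact hG.ordConnected_pInterval_of_ordConnected ih

lemma IsUnitIntervalOrder.adj_of_adj_bot_of_adj_top (hG : IsUnitIntervalOrder G)
    {vL vR x y : V} (hL : IsBot vL) (hR : IsTop vR) (hxL : G.Adj x vL) (hxR : G.Adj x vR)
    (hyx : y ≠ x) : G.Adj x y :=
  (hG x vL y vR (Or.inr hxL) (Or.inr hxR) (hL y) (hR y)).resolve_left hyx

lemma IsUnitIntervalOrder.pInterval_pair_eq_univ (hG : IsUnitIntervalOrder G)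
    {vL vR u v : V} (hL : IsBot vL) (hR : IsTop vR) (hLR : vL ≠ vR) (huv : u ≠ v)
    (hne : ({u, v} : Set V) ≠ {vL, vR})
    (hvL : vL ∈ pInterval G {u, v}) (hvR : vR ∈ pInterval G {u, v}) :
    pInterval G {u, v} = Set.univ := by
  have huniv : ∀ x ∈ ({u, v} : Set V), ∀ y ≠ x, G.Adj x y := by
    by_cases hadj : G.Adj vL vR
    · intro x _ y hyx
      exact hG.isClique_uIcc hadj (Set.mem_uIcc_of_le (hL x) (hR x))
        (Set.mem_uIcc_of_le (hL y) (hR y)) hyx.symm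
    · rw [mem_pInterval_pair huv] at hvL hvR
      rw [Ne, Set.pair_eq_pair_iff] at hne
      have hcommon : (G.Adj u vL ∧ G.Adj v vL) ∧ G.Adj u vR ∧ G.Adj v vR := by
        grind [G.adj_comm]
      rintro x (rfl | rfl) y hyx
      · exact hG.adj_of_adj_bot_of_adj_top hL hR hcommon.1.1 hcommon.2.1 hyx
      · exact hG.adj_of_adj_bot_of_adj_top hL hR hcommon.1.2 hcommon.2.2 hyx
  refine Set.eq_univ_of_forall fun y => (mem_pInterval_pair huv).2 ?_
  by_cases hyu : y = u
  · exact Or.inl hyu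
  by_cases hyv : y = v
  · exact Or.inr (Or.inl hyv)
  exact Or.inr (Or.inr ⟨huniv u (by simp) y hyu, huniv v (by simp) y hyv⟩)

theorem IsUnitIntervalOrder.pIter_pair_eq_univ (hG : IsUnitIntervalOrder G)
    {vL vR u v : V} (hL : IsBot vL) (hR : IsTop vR) (huv : u ≠ v)
    (hne : ({u, v} : Set V) ≠ {vL, vR}) {n : ℕ}
    (hvL : vL ∈ pIter G {u, v} n) (hvR : vR ∈ pIter G {u, v} n) :
    pIter G {u, v} n = Set.univ := by
  have hLR : vL ≠ vR := by
    rintro rfl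
    have : Nontrivial V := ⟨⟨u, v, huv⟩⟩
    exact hL.not_isTop hR
  rcases lt_or_ge n 2 with hn | hn
  · interval_cases n
    · exact absurd (Set.pair_eq_of_mem_pair hLR hvL hvR) hne
    · exact hG.pInterval_pair_eq_univ hL hR hLR huv hne hvL hvR
  obtain ⟨c, hu, hv⟩ : ∃ c, G.Adj u c ∧ G.Adj v c := by
    by_contra hc
    have hfix : pInterval G {u, v} = {u, v} := by
      ext w
      rw [mem_pInterval_pair huv]
      grind
    rw [pIter_eq_self_of_pInterval_eq hfix] at hvL hvR
    exact hne (Set.pair_eq_of_mem_pair hLR hvL hvR)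
  exact Set.eq_univ_of_forall fun y =>
    (hG.ordConnected_pIter_pair huv hu hv hn).out hvL hvR ⟨hL y, hR y⟩

end UnitInterval

theorem percTime_eq_max_extremes_general {V : Type*} [LinearOrder V]
    (G : SimpleGraph V) (hG : IsUnitIntervalOrder G)
    (vL vR : V) (hL : ∀ x, vL ≤ x) (hR : ∀ x, x ≤ vR)
    (u v : V) (huv : u ≠ v) (hne : ({u, v} : Set V) ≠ {vL, vR})
    (hhull : Percolates G {u, v}) :
    percTime G {u, v} =
      max (percTimeAt G {u, v} vL) (percTimeAt G {u, v} vR) := by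
  refine le_antisymm (percTime_le ?_)
    (max_le (percTimeAt_le_percTime hhull vL) (percTimeAt_le_percTime hhull vR))
  exact hG.pIter_pair_eq_univ hL hR huv hne
    (pIter_monotone G _ (le_max_left _ _) (mem_pIter_percTimeAt hhull vL))
    (pIter_monotone G _ (le_max_right _ _) (mem_pIter_percTimeAt hhull vR))

/-- For a two-element hull set `H ≠ {v_L, v_R}` of a 2-connected unit interval graph,
the percolation time of `H` is `max (τ_H(v_L)) (τ_H(v_R))`. -/
theorem percTime_eq_max_extremes {V : Type*} [Fintype V] [LinearOrder V]
    (G : SimpleGraph V) (hG : IsUnitIntervalOrder G) (h2 : TwoConnected G)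
    (vL vR : V) (hL : ∀ x, vL ≤ x) (hR : ∀ x, x ≤ vR)
    (u v : V) (huv : u ≠ v) (hne : ({u, v} : Set V) ≠ {vL, vR})
    (hhull : Percolates G {u, v}) :
    percTime G {u, v} =
      max (percTimeAt G {u, v} vL) (percTimeAt G {u, v} vR) :=
  percTime_eq_max_extremes_general G hG vL vR hL hR u v huv hne hhull
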